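/- If H₁ ⊆ H₂ are subgroups of G_A, then H₂^T ⊆ H₁^T, and the quotient groups H₂/H₁ and H₁^T/H₂^T are isomorphic (in particular they have the same, finite, order). -/

import Mathlib

open scoped BigOperators
open Matrix

noncomputable section

abbrev QZ : Type := AddCircle (1 : ℚ)

def qz : ℚ →+ QZ := QuotientAddGroup.mk' _

def GA {n : ℕ} (A : Matrix (Fin n) (Fin n) ℤ) : AddSubgroup (Fin n → QZ) where
  carrier := {g | ∀ i, ∑ j, A i j • g j = 0}
  zero_mem' := by intro i; simp
  add_mem' := by
    intro a b ha hb i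
    simp only [Pi.add_apply, smul_add, Finset.sum_add_distrib, ha i, hb i, add_zero]
  neg_mem' := by
    intro a ha i
    simp only [Pi.neg_apply, smul_neg, Finset.sum_neg_distrib, ha i, neg_zero]

def SLA {n : ℕ} (A : Matrix (Fin n) (Fin n) ℤ) : AddSubgroup (Fin n → QZ) where
  carrier := {g | g ∈ GA A ∧ ∑ i, g i = 0}
  zero_mem' := ⟨(GA A).zero_mem, by simp⟩
  add_mem' := by
    intro a b ha hb
    exact ⟨(GA A).add_mem ha.1 hb.1, by simp [Pi.add_apply, Finset.sum_add_distrib, ha.2, hb.2]⟩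
  neg_mem' := by
    intro a ha
    exact ⟨(GA A).neg_mem ha.1, by simp [Pi.neg_apply, Finset.sum_neg_distrib, ha.2]⟩

def jA {n : ℕ} (A : Matrix (Fin n) (Fin n) ℤ) : Fin n → QZ :=
  fun i => qz (((A.map (Int.cast : ℤ → ℚ))⁻¹).mulVec 1 i)

/-- `v : ℚ^n` is a lift of `g : (ℚ/ℤ)^n`. -/
def IsLift {n : ℕ} (v : Fin n → ℚ) (g : Fin n → QZ) : Prop := ∀ i, qz (v i) = g i

lemma qz_eq_zero_iff (q : ℚ) : qz q = 0 ↔ ∃ m : ℤ, (m : ℚ) = q := by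
  constructor
  · intro h
    have : q ∈ AddSubgroup.zmultiples (1 : ℚ) := by
      rwa [qz, QuotientAddGroup.mk'_apply, QuotientAddGroup.eq_zero_iff] at h
    obtain ⟨k, hk⟩ := this
    exact ⟨k, by simpa using hk⟩
  · rintro ⟨m, rfl⟩
    rw [qz, QuotientAddGroup.mk'_apply, QuotientAddGroup.eq_zero_iff]
    exact ⟨m, by simp⟩

lemma exists_lift {n : ℕ} (g : Fin n → QZ) : ∃ v : Fin n → ℚ, IsLift v g := by
  choose v hv using fun i => QuotientAddGroup.mk'_surjective _ (g i)
  exact ⟨v, hv⟩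

lemma row_int {n : ℕ} {A : Matrix (Fin n) (Fin n) ℤ} {h : Fin n → QZ} (hh : h ∈ GA A)
    {vh : Fin n → ℚ} (hl : IsLift vh h) (i : Fin n) :
    ∃ m : ℤ, (m : ℚ) = ∑ j, (A i j : ℚ) * vh j := by
  have h0 : qz (∑ j, (A i j : ℚ) * vh j) = 0 := by
    have := hh i
    calc qz (∑ j, (A i j : ℚ) * vh j) = ∑ j, A i j • qz (vh j) := by
          rw [map_sum]
          refine Finset.sum_congr rfl fun j _ => ?_
          rw [← map_zsmul qz, zsmul_eq_mul]
      _ = ∑ j, A i j • h j := by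
          refine Finset.sum_congr rfl fun j _ => by rw [hl j]
      _ = 0 := hh i
  exact (qz_eq_zero_iff _).1 h0

/-- The Berglund–Hübsch dual `H^T` of a subgroup `H ≤ G_A`: all `g ∈ G_{Aᵀ}` such that
for every `h ∈ H` and all lifts `ĝ, ĥ ∈ ℚ^n` of `g, h`, the number `∑ᵢⱼ ĝᵢ Aᵢⱼ ĥⱼ` is an
integer. -/
def dual {n : ℕ} (A : Matrix (Fin n) (Fin n) ℤ) (H : AddSubgroup (Fin n → QZ))
    (hH : H ≤ GA A) : AddSubgroup (Fin n → QZ) where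
  carrier := {g | g ∈ GA Aᵀ ∧ ∀ h ∈ H, ∀ vg vh : Fin n → ℚ, IsLift vg g → IsLift vh h →
    ∃ m : ℤ, (m : ℚ) = ∑ i, ∑ j, vg i * (A i j : ℚ) * vh j}
  zero_mem' := by
    refine ⟨(GA Aᵀ).zero_mem, ?_⟩
    intro h hh vg vh lg lh
    have hg : ∀ i, ∃ m : ℤ, (m : ℚ) = vg i := by
      intro i
      exact (qz_eq_zero_iff _).1 ((lg i).trans rfl)
    choose mg hmg using hg
    choose c hc using fun i => row_int (hH hh) lh i
    refine ⟨∑ i, mg i * c i, ?_⟩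
    push_cast
    calc (∑ i, (mg i : ℚ) * (c i : ℚ))
        = ∑ i, vg i * ∑ j, (A i j : ℚ) * vh j := by
          refine Finset.sum_congr rfl fun i _ => by rw [hmg i, hc i]
      _ = ∑ i, ∑ j, vg i * (A i j : ℚ) * vh j := by
          refine Finset.sum_congr rfl fun i _ => ?_
          rw [Finset.mul_sum]
          exact Finset.sum_congr rfl fun j _ => (mul_assoc _ _ _).symm
  add_mem' := by
    intro a b ha hb
    refine ⟨(GA Aᵀ).add_mem ha.1 hb.1, ?_⟩
    intro h hh vg vh lg lh
    obtain ⟨va, hva⟩ := exists_lift a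
    have hvb : IsLift (vg - va) b := by
      intro i
      have : qz (vg i - va i) = qz (vg i) - qz (va i) := map_sub qz _ _
      rw [Pi.sub_apply, this, lg i, hva i, Pi.add_apply, add_sub_cancel_left]
    obtain ⟨m₁, e₁⟩ := ha.2 h hh va vh hva lh
    obtain ⟨m₂, e₂⟩ := hb.2 h hh (vg - va) vh hvb lh
    refine ⟨m₁ + m₂, ?_⟩
    push_cast
    rw [e₁, e₂, ← Finset.sum_add_distrib]
    refine Finset.sum_congr rfl fun i _ => ?_
    rw [← Finset.sum_add_distrib]
    refine Finset.sum_congr rfl fun j _ => ?_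
    simp only [Pi.sub_apply]
    ring
  neg_mem' := by
    intro a ha
    refine ⟨(GA Aᵀ).neg_mem ha.1, ?_⟩
    intro h hh vg vh lg lh
    have hvg : IsLift (-vg) a := by
      intro i
      have : qz (-(vg i)) = - qz (vg i) := map_neg qz _
      rw [Pi.neg_apply, this, lg i, Pi.neg_apply, neg_neg]
    obtain ⟨m, e⟩ := ha.2 h hh (-vg) vh hvg lh
    refine ⟨-m, ?_⟩
    push_cast
    rw [e, ← Finset.sum_neg_distrib]
    refine Finset.sum_congr rfl fun i _ => ?_
    rw [← Finset.sum_neg_distrib]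
    refine Finset.sum_congr rfl fun j _ => ?_
    simp only [Pi.neg_apply]
    ring

lemma dual_le {n : ℕ} (A : Matrix (Fin n) (Fin n) ℤ) (H : AddSubgroup (Fin n → QZ))
    (hH : H ≤ GA A) : dual A H hH ≤ GA Aᵀ := fun _ hg => hg.1

lemma SLA_le {n : ℕ} (A : Matrix (Fin n) (Fin n) ℤ) : SLA A ≤ GA A := fun _ hg => hg.1


/-!
Identify `(ℚ/ℤ)ⁿ` with the character group `Hom(ℤⁿ, ℚ/ℤ)` through `g ↦ (m ↦ ∑ mᵢ gᵢ)` and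
parametrize `G_A` by the surjection `ℤⁿ → G_A`, `m ↦ A⁻¹ m mod ℤⁿ`. Then `H^T` is exactly the
annihilator of the preimage `K` of `H`. For `K₁ ≤ K₂`, restricting characters gives
`Ann K₁ / Ann K₂ ≅ Hom(K₂/K₁, ℚ/ℤ)`, onto because `ℚ/ℤ` is divisible, hence an injective
`ℤ`-module. Finally `K₂/K₁ ≅ H₂/H₁` is finite, since `det A` kills `G_A`, and a finite abelian
group is isomorphic to its `ℚ/ℤ`-dual.
-/

section CharacterDuality

instance AddCircle.hasEnoughRootsOfUnity {𝕜 : Type*} [Field 𝕜] [LinearOrder 𝕜]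
    [IsStrictOrderedRing 𝕜] (p : 𝕜) [Fact (0 < p)] (n : ℕ) [NeZero n] :
    HasEnoughRootsOfUnity (Multiplicative (AddCircle p)) n := by
  have hn : 0 < n := Nat.pos_of_neZero n
  set ζ : Multiplicative (AddCircle p) := .ofAdd ↑(p / n)
  have hζ : IsPrimitiveRoot ζ n := by
    rw [IsPrimitiveRoot.iff_orderOf, orderOf_ofAdd_eq_addOrderOf,
      AddCircle.addOrderOf_period_div hn]
  refine ⟨⟨ζ, hζ⟩, ⟨hζ.toRootsOfUnity, fun x => ?_⟩⟩
  have hx : n • (x.1.1 : Multiplicative (AddCircle p)).toAdd = 0 := by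
    rw [← toAdd_pow, ← Units.val_pow_eq_pow_val, (mem_rootsOfUnity _ _).1 x.2]
    rfl
  obtain ⟨m, -, hm⟩ := (AddCircle.nsmul_eq_zero_iff hn).1 hx
  refine ⟨m, Subtype.ext (Units.ext ?_)⟩
  simp only [Subgroup.coe_zpow, Units.val_zpow_eq_zpow_val, IsPrimitiveRoot.val_toRootsOfUnity_coe]
  apply Multiplicative.toAdd.injective
  rw [toAdd_zpow, ← hm, toAdd_ofAdd, ← AddCircle.coe_zsmul]
  congr 1
  rw [zsmul_eq_mul, Int.cast_natCast]
  ring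

theorem AddCircle.nonempty_addEquiv_addMonoidHom {𝕜 : Type*} [Field 𝕜] [LinearOrder 𝕜]
    [IsStrictOrderedRing 𝕜] (p : 𝕜) [Fact (0 < p)] (G : Type*) [AddCommGroup G] [Finite G] :
    Nonempty (G ≃+ (G →+ AddCircle p)) := by
  have : NeZero (Monoid.exponent (Multiplicative G)) := ⟨Monoid.exponent_ne_zero_of_finite⟩
  obtain ⟨e⟩ := CommGroup.monoidHom_mulEquiv_of_hasEnoughRootsOfUnity (Multiplicative G)
    (Multiplicative (AddCircle p))
  let toMul : (G →+ AddCircle p) ≃+ Additive (Multiplicative G →* Multiplicative (AddCircle p)) :=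
    { AddMonoidHom.toMultiplicative.trans Additive.ofMul with map_add' := fun _ _ => rfl }
  exact ⟨(MulEquiv.toAdditive (e.symm.trans (MulEquiv.monoidHomCongrRight toUnits.symm))).trans
    toMul.symm⟩

variable {M N : Type*} [AddCommGroup M] [AddCommGroup N]

def AddMonoidHom.annihilator (e : M →+ N →+ QZ) (K : AddSubgroup N) : AddSubgroup M where
  carrier := {m | ∀ k ∈ K, e m k = 0}
  zero_mem' := by simp
  add_mem' := by
    intro a b ha hb k hk
    simp [ha k hk, hb k hk]
  neg_mem' := by
    intro a ha k hk
    simp [ha k hk]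

namespace AddMonoidHom

variable (e : M →+ N →+ QZ)

theorem mem_annihilator {K : AddSubgroup N} {m : M} :
    m ∈ e.annihilator K ↔ ∀ k ∈ K, e m k = 0 := Iff.rfl

theorem annihilator_antitone : Antitone e.annihilator :=
  fun _ _ hK _ hm k hk => hm k (hK hk)

theorem nonempty_annihilator_quotient_addEquiv (he : Function.Surjective e)
    {K₁ K₂ : AddSubgroup N} (hK : K₁ ≤ K₂) :
    Nonempty (e.annihilator K₁ ⧸ (e.annihilator K₂).addSubgroupOf (e.annihilator K₁) ≃+
      (K₂ ⧸ K₁.addSubgroupOf K₂ →+ QZ)) := by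
  let restrict : e.annihilator K₁ →+ (K₂ ⧸ K₁.addSubgroupOf K₂ →+ QZ) :=
    { toFun m := QuotientAddGroup.lift _ ((e m).comp K₂.subtype)
        fun k hk => m.2 k (AddSubgroup.mem_addSubgroupOf.1 hk)
      map_zero' := by ext; simp
      map_add' _ _ := by ext; simp only [AddSubgroup.coe_add, map_add]; rfl }
  have hker : restrict.ker = (e.annihilator K₂).addSubgroupOf (e.annihilator K₁) := by
    ext m
    simp only [AddMonoidHom.mem_ker, AddSubgroup.mem_addSubgroupOf, mem_annihilator]
    constructor
    · intro h k hk
      exact DFunLike.congr_fun h (QuotientAddGroup.mk ⟨k, hk⟩)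
    · intro h
      ext k
      exact h k k.2
  have hsurj : Function.Surjective restrict := by
    intro χ
    obtain ⟨ψ, hψ⟩ := CharacterModule.dual_surjective_of_injective K₂.subtype.toIntLinearMap
      Subtype.val_injective (χ.comp (QuotientAddGroup.mk' _))
    obtain ⟨m, rfl⟩ := he ψ
    refine ⟨⟨m, fun k hk => ?_⟩, ?_⟩
    · have hk0 : QuotientAddGroup.mk' (K₁.addSubgroupOf K₂) ⟨k, hK hk⟩ = 0 :=
        (QuotientAddGroup.eq_zero_iff _).2 (AddSubgroup.mem_addSubgroupOf.2 hk)
      exact (DFunLike.congr_fun hψ ⟨k, hK hk⟩).trans (show χ _ = 0 by rw [hk0, map_zero])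
    · ext k
      exact DFunLike.congr_fun hψ k
  exact ⟨(QuotientAddGroup.quotientAddEquivOfEq hker.symm).trans
    (QuotientAddGroup.quotientKerEquivOfSurjective restrict hsurj)⟩

end AddMonoidHom

theorem AddSubgroup.nonempty_comap_quotient_addEquiv (f : N →+ M) {H₁ H₂ : AddSubgroup M}
    (hH₂ : H₂ ≤ f.range) :
    Nonempty (H₂.comap f ⧸ (H₁.comap f).addSubgroupOf (H₂.comap f) ≃+
      H₂ ⧸ H₁.addSubgroupOf H₂) := by
  let φ := (QuotientAddGroup.mk' (H₁.addSubgroupOf H₂)).comp (f.addSubgroupComap H₂)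
  have hsurj : Function.Surjective φ := by
    refine (QuotientAddGroup.mk'_surjective _).comp fun h => ?_
    obtain ⟨k, hk⟩ := hH₂ h.2
    exact ⟨⟨k, show f k ∈ H₂ from hk ▸ h.2⟩, Subtype.ext hk⟩
  have hker : φ.ker = (H₁.comap f).addSubgroupOf (H₂.comap f) := by
    ext k
    simp only [φ, AddMonoidHom.mem_ker, AddMonoidHom.comp_apply, QuotientAddGroup.mk'_apply,
      QuotientAddGroup.eq_zero_iff, AddSubgroup.mem_addSubgroupOf, AddSubgroup.mem_comap]
    rfl
  exact ⟨(QuotientAddGroup.quotientAddEquivOfEq hker.symm).trans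
    (QuotientAddGroup.quotientKerEquivOfSurjective φ hsurj)⟩

end CharacterDuality

def dotPairing (ι M : Type*) [Fintype ι] [AddCommGroup M] : (ι → M) →+ (ι → ℤ) →+ M :=
  AddMonoidHom.mk' (fun g => AddMonoidHom.mk' (fun m => ∑ i, m i • g i)
    fun a b => by simp [add_smul, Finset.sum_add_distrib])
    fun a b => by ext m; simp [smul_add, Finset.sum_add_distrib]

theorem dotPairing_apply {ι M : Type*} [Fintype ι] [AddCommGroup M] (g : ι → M) (m : ι → ℤ) :
    dotPairing ι M g m = ∑ i, m i • g i := rfl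

theorem dotPairing_surjective (ι M : Type*) [Fintype ι] [AddCommGroup M] :
    Function.Surjective (dotPairing ι M) := by
  classical
  intro χ
  refine ⟨fun i => χ (Pi.single i 1), ?_⟩
  ext i
  simp [dotPairing_apply, Pi.single_apply]

section BerglundHuebschDual

variable {n : ℕ}

def paramGA (A : Matrix (Fin n) (Fin n) ℤ) : (Fin n → ℤ) →+ (Fin n → QZ) :=
  (qz.compLeft (Fin n)).comp
    (((A.map ((↑) : ℤ → ℚ))⁻¹.mulVecLin.toAddMonoidHom).comp ((Int.castAddHom ℚ).compLeft (Fin n)))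

theorem paramGA_apply (A : Matrix (Fin n) (Fin n) ℤ) (m : Fin n → ℤ) :
    paramGA A m = fun i => qz (((A.map ((↑) : ℤ → ℚ))⁻¹ *ᵥ fun j => (m j : ℚ)) i) := rfl

theorem isLift_paramGA (A : Matrix (Fin n) (Fin n) ℤ) (m : Fin n → ℤ) :
    IsLift ((A.map ((↑) : ℤ → ℚ))⁻¹ *ᵥ fun j => (m j : ℚ)) (paramGA A m) := fun _ => rfl

theorem isUnit_det_map_intCast {A : Matrix (Fin n) (Fin n) ℤ} (hA : A.det ≠ 0) :
    IsUnit (A.map ((↑) : ℤ → ℚ)).det := by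
  rw [← Int.cast_det]
  exact isUnit_iff_ne_zero.2 (by exact_mod_cast hA)

theorem paramGA_eq_of_mulVec_eq {A : Matrix (Fin n) (Fin n) ℤ} (hA : A.det ≠ 0)
    {v : Fin n → ℚ} {h : Fin n → QZ} (hv : IsLift v h) {m : Fin n → ℤ}
    (hm : A.map ((↑) : ℤ → ℚ) *ᵥ v = fun i => (m i : ℚ)) : paramGA A m = h := by
  funext i
  rw [paramGA_apply, ← hm, mulVec_mulVec, nonsing_inv_mul _ (isUnit_det_map_intCast hA),
    one_mulVec]
  exact hv i

theorem exists_mulVec_eq_intCast {A : Matrix (Fin n) (Fin n) ℤ} {h : Fin n → QZ} (hh : h ∈ GA A)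
    {v : Fin n → ℚ} (hv : IsLift v h) :
    ∃ m : Fin n → ℤ, A.map ((↑) : ℤ → ℚ) *ᵥ v = fun i => (m i : ℚ) := by
  choose m hm using row_int hh hv
  exact ⟨m, funext fun i => (hm i).symm⟩

theorem GA_le_range_paramGA {A : Matrix (Fin n) (Fin n) ℤ} (hA : A.det ≠ 0) :
    GA A ≤ (paramGA A).range := by
  intro h hh
  obtain ⟨v, hv⟩ := exists_lift h
  obtain ⟨m, hm⟩ := exists_mulVec_eq_intCast hh hv
  exact ⟨m, paramGA_eq_of_mulVec_eq hA hv hm⟩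

theorem det_smul_eq_zero_of_mem_GA {A : Matrix (Fin n) (Fin n) ℤ} {g : Fin n → QZ}
    (hg : g ∈ GA A) (k : Fin n) : A.det • g k = 0 := by
  calc A.det • g k = ∑ j, (A.adjugate * A) k j • g j := by
        simp [adjugate_mul, Matrix.one_apply, ite_smul]
    _ = ∑ i, A.adjugate k i • ∑ j, A i j • g j := by
        simp only [Matrix.mul_apply, Finset.sum_smul, Finset.smul_sum, mul_smul]
        exact Finset.sum_comm
    _ = 0 := by simp [hg _]

theorem finite_GA {A : Matrix (Fin n) (Fin n) ℤ} (hA : A.det ≠ 0) : Finite (GA A) := by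
  have htors : {x : QZ | A.det • x = 0}.Finite := by
    simpa only [natAbs_nsmul_eq_zero] using AddCircle.finite_torsion 1 (Int.natAbs_pos.2 hA)
  refine ((Set.Finite.pi fun _ => htors).subset fun g hg => ?_).to_subtype
  exact Set.mem_univ_pi.2 (det_smul_eq_zero_of_mem_GA hg)

theorem qz_dotProduct_intCast {v : Fin n → ℚ} {g : Fin n → QZ} (hv : IsLift v g) (m : Fin n → ℤ) :
    qz (v ⬝ᵥ fun i => (m i : ℚ)) = dotPairing (Fin n) QZ g m := by
  simp only [dotProduct, map_sum, dotPairing_apply, ← hv _, ← map_zsmul, zsmul_eq_mul, mul_comm]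

theorem sum_mul_mul_eq_dotProduct_mulVec (A : Matrix (Fin n) (Fin n) ℤ) (v w : Fin n → ℚ) :
    ∑ i, ∑ j, v i * (A i j : ℚ) * w j = v ⬝ᵥ (A.map ((↑) : ℤ → ℚ) *ᵥ w) := by
  simp [dotProduct, mulVec, Finset.mul_sum, mul_assoc]

theorem dual_eq_annihilator {A : Matrix (Fin n) (Fin n) ℤ} (hA : A.det ≠ 0)
    (H : AddSubgroup (Fin n → QZ)) (hH : H ≤ GA A) :
    dual A H hH = (dotPairing (Fin n) QZ).annihilator (H.comap (paramGA A)) := by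
  ext g
  obtain ⟨vg, hvg⟩ := exists_lift g
  constructor
  · rintro ⟨-, hg⟩ m hm
    obtain ⟨k, hk⟩ := hg _ hm vg _ hvg (isLift_paramGA A m)
    rw [sum_mul_mul_eq_dotProduct_mulVec, mulVec_mulVec,
      mul_nonsing_inv _ (isUnit_det_map_intCast hA), one_mulVec] at hk
    rw [← qz_dotProduct_intCast hvg, ← hk, qz_eq_zero_iff]
    exact ⟨k, rfl⟩
  · intro hg
    refine ⟨fun j => ?_, fun h hh vg' vh hvg' hvh => ?_⟩
    · -- `g ∈ G_{Aᵀ}` says that `g` annihilates the columns of `A`, which `paramGA A` kills.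
      have hcol : paramGA A (fun i => A i j) = 0 :=
        paramGA_eq_of_mulVec_eq hA (v := Pi.single j 1) (fun i => by
          rcases eq_or_ne i j with rfl | hij <;> simp [*, qz_eq_zero_iff]) (by
            rw [mulVec_single_one]; ext; simp)
      simpa [dotPairing_apply] using hg _ (show _ ∈ H by rw [hcol]; exact H.zero_mem)
    · obtain ⟨m, hm⟩ := exists_mulVec_eq_intCast (hH hh) hvh
      have := hg m (show paramGA A m ∈ H from (paramGA_eq_of_mulVec_eq hA hvh hm) ▸ hh)
      rw [← qz_dotProduct_intCast hvg', qz_eq_zero_iff] at this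
      rwa [sum_mul_mul_eq_dotProduct_mulVec, hm]

end BerglundHuebschDual

theorem dual_antitone_quotient_iso_general {n : ℕ} (A : Matrix (Fin n) (Fin n) ℤ)
    (hA : A.det ≠ 0) (H₁ H₂ : AddSubgroup (Fin n → QZ))
    (hH₁ : H₁ ≤ GA A) (hH₂ : H₂ ≤ GA A) (h12 : H₁ ≤ H₂) :
    dual A H₂ hH₂ ≤ dual A H₁ hH₁ ∧
    Finite (H₂ ⧸ H₁.addSubgroupOf H₂) ∧
    Nonempty ((H₂ ⧸ H₁.addSubgroupOf H₂) ≃+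
      (dual A H₁ hH₁ ⧸ (dual A H₂ hH₂).addSubgroupOf (dual A H₁ hH₁))) := by
  have hK : H₁.comap (paramGA A) ≤ H₂.comap (paramGA A) := AddSubgroup.comap_mono h12
  have := finite_GA hA
  have : Finite H₂ := Finite.of_injective _ (AddSubgroup.inclusion_injective hH₂)
  rw [dual_eq_annihilator hA H₁ hH₁, dual_eq_annihilator hA H₂ hH₂]
  obtain ⟨eComap⟩ := AddSubgroup.nonempty_comap_quotient_addEquiv (paramGA A) (H₁ := H₁)
    (hH₂.trans (GA_le_range_paramGA hA))
  have : Finite (H₂.comap (paramGA A) ⧸ _) := Finite.of_equiv _ eComap.symm.toEquiv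
  obtain ⟨eSelf⟩ := AddCircle.nonempty_addEquiv_addMonoidHom (1 : ℚ)
    (H₂.comap (paramGA A) ⧸ (H₁.comap (paramGA A)).addSubgroupOf (H₂.comap (paramGA A)))
  obtain ⟨eAnn⟩ := (dotPairing (Fin n) QZ).nonempty_annihilator_quotient_addEquiv
    (dotPairing_surjective (Fin n) QZ) hK
  exact ⟨(dotPairing (Fin n) QZ).annihilator_antitone hK, inferInstance,
    ⟨eComap.symm.trans (eSelf.trans eAnn.symm)⟩⟩

/-- if `H₁ ⊆ H₂ ⊆ G_A` then `H₂^T ⊆ H₁^T` and `H₂/H₁ ≅ H₁^T/H₂^T`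
(in particular these quotients have the same, finite, order). -/
theorem dual_antitone_quotient_iso {n : ℕ} (hn : 1 ≤ n) (A : Matrix (Fin n) (Fin n) ℤ)
    (hA : A.det ≠ 0) (H₁ H₂ : AddSubgroup (Fin n → QZ))
    (hH₁ : H₁ ≤ GA A) (hH₂ : H₂ ≤ GA A) (h12 : H₁ ≤ H₂) :
    dual A H₂ hH₂ ≤ dual A H₁ hH₁ ∧
    Finite (H₂ ⧸ H₁.addSubgroupOf H₂) ∧
    Nonempty ((H₂ ⧸ H₁.addSubgroupOf H₂) ≃+
      (dual A H₁ hH₁ ⧸ (dual A H₂ hH₂).addSubgroupOf (dual A H₁ hH₁))) :=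
  dual_antitone_quotient_iso_general A hA H₁ H₂ hH₁ hH₂ h12
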